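/- For every (λ, μ, c) ∈ Ω × ℝⁿ × ℝᴺ and all r, p ∈ {1,…,n}, the curve-0 Hamiltonians satisfy (∂h_r/∂λ_p)(λ, μ, c) = (−1)^{r+1} e_{r−1}(λ̂_p) · (1/Δ_p) · ( f′(λ_p) μ_p² − σ′(λ_p) − Σ_{k=1}^{N} (n+k−1) c_k λ_p^{n+k−2} − Σ_{k=1}^{n} (n−k) h_k(λ, μ, c) λ_p^{n−k−1} ), where f′ and σ′ are the derivatives of the Laurent polynomials f and σ, e_m denotes the m-th elementary symmetric polynomial (e_0 = 1), and e_{r−1}(λ̂_p) := e_{r−1}(λ_1,…,λ_{p−1},λ_{p+1},…,λ_n). -/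

import Mathlib

open Finset Function

noncomputable section

/-- Evaluation of a Laurent polynomial `p ∈ ℝ[λ,λ⁻¹]` at a real number `x`
(meaningful for `x ≠ 0`, using `zpow`). -/
def leval (p : LaurentPolynomial ℝ) (x : ℝ) : ℝ :=
  Finsupp.sum p.coeff fun k a => a * x ^ k

/-- The open set `Ω ⊂ ℝⁿ` of tuples with nonzero, pairwise distinct entries. -/
def Omega (n : ℕ) : Set (Fin n → ℝ) :=
  {lam | (∀ i, lam i ≠ 0) ∧ Function.Injective lam}

/-- `H` is the family of curve-`s` Stäckel Hamiltonians: it satisfies, at every point of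
`Ω × ℝⁿ × ℝᴺ`, the curve-`s` separation relations
`σ(λᵢ)λᵢ⁻ˢ + Σ_{k=s+1}^{N} c_k λᵢ^{n+k-s-1} + Σ_{q=1}^{n} h_q λᵢ^{n-q}
  + Σ_{k=1}^{s} c_k λᵢ^{k-s-1} = f(λᵢ) λᵢˢ μᵢ²`.
Here everything is 0-based: `H lam mu c q` is `h_{q+1}`, `c j` is `c_{j+1}`,
`lam i` is `λ_{i+1}`.  (These relations determine `H` uniquely on `Ω × ℝⁿ × ℝᴺ`,
by invertibility of the Vandermonde matrix.) -/
def SepSol (n N : ℕ) (f σ : LaurentPolynomial ℝ) (s : ℕ)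
    (H : (Fin n → ℝ) → (Fin n → ℝ) → (Fin N → ℝ) → Fin n → ℝ) : Prop :=
  ∀ lam ∈ Omega n, ∀ (mu : Fin n → ℝ) (c : Fin N → ℝ), ∀ i : Fin n,
    leval σ (lam i) * lam i ^ (-(s : ℤ))
      + (∑ j : Fin N,
          if s ≤ (j : ℕ) then c j * lam i ^ ((n : ℤ) + (j : ℕ) - (s : ℕ))
          else c j * lam i ^ (((j : ℕ) : ℤ) - (s : ℕ)))
      + (∑ q : Fin n, H lam mu c q * lam i ^ ((n : ℤ) - 1 - (q : ℕ)))
      = leval f (lam i) * lam i ^ (s : ℤ) * mu i ^ 2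

/-- Partial derivative `∂h_r/∂λ_p`. -/
def pLam {n N : ℕ} (H : (Fin n → ℝ) → (Fin n → ℝ) → (Fin N → ℝ) → Fin n → ℝ)
    (lam mu : Fin n → ℝ) (c : Fin N → ℝ) (r p : Fin n) : ℝ :=
  deriv (fun t => H (Function.update lam p t) mu c r) (lam p)

/-- Partial derivative `∂h_r/∂μ_p`. -/
def pMu {n N : ℕ} (H : (Fin n → ℝ) → (Fin n → ℝ) → (Fin N → ℝ) → Fin n → ℝ)
    (lam mu : Fin n → ℝ) (c : Fin N → ℝ) (r p : Fin n) : ℝ :=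
  deriv (fun t => H lam (Function.update mu p t) c r) (mu p)

/-- The `k`-th elementary symmetric polynomial of the values of `lam` on the finset `s`
(`e_0 = 1`). -/
def esym {n : ℕ} (s : Finset (Fin n)) (lam : Fin n → ℝ) (k : ℕ) : ℝ :=
  ∑ t ∈ Finset.powersetCard k s, ∏ i ∈ t, lam i

/-- `Δ_i = ∏_{k ≠ i} (λ_i - λ_k)`. -/
def Delt {n : ℕ} (lam : Fin n → ℝ) (i : Fin n) : ℝ :=
  ∏ k ∈ Finset.univ.erase i, (lam i - lam k)

/-! On `Ω` the curve-0 relations read `V(λ) h = g(λ)`, where `V(λ)_{iq} = λ_i^{n-1-q}` is a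
reversed Vandermonde matrix and `g_i(λ) = f(λ_i) μ_i² - σ(λ_i) - ∑_k c_k λ_i^{n+k-1}` depends
on `λ_i` only. By Vieta's formula
`∑_q λ_i^{n-1-q} (-1)^q e_q(λ̂_j) = ∏_{k ≠ j} (λ_i - λ_k) = δ_{ij} Δ_j`, so `V⁻¹` has entries
`(-1)^q e_q(λ̂_i) / Δ_i`; in particular `h = V⁻¹ g` is differentiable on the open set `Ω`.
Differentiating the relations in `λ_p`, only the `p`-th one involves `λ_p`, so
`V ∂_p h = (g_p' - (∂_p V h)_p) e_p`, and `∂_p h` is that multiple of the `p`-th column of `V⁻¹`. -/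

open Matrix Topology

section Vandermonde

variable {n : ℕ}

lemma prod_sub_eq_sum_esym (s : Finset (Fin n)) (lam : Fin n → ℝ) (x : ℝ) :
    ∏ k ∈ s, (x - lam k) = ∑ j ∈ range (#s + 1), (-1) ^ j * esym s lam j * x ^ (#s - j) := by
  have h := congrArg (Polynomial.eval x) (Multiset.prod_X_sub_X_eq_sum_esymm (s.val.map lam))
  simp only [Polynomial.eval_multiset_prod, Multiset.map_map, Function.comp_def,
    Polynomial.eval_sub, Polynomial.eval_X, Polynomial.eval_C, Polynomial.eval_finsetSum,
    Polynomial.eval_mul, Polynomial.eval_pow, Polynomial.eval_neg, Polynomial.eval_one,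
    Multiset.card_map, Finset.esymm_map_val] at h
  simpa only [esym, Finset.prod, Finset.card_val, mul_assoc] using h

lemma sum_esym_erase_mul_zpow (lam : Fin n → ℝ) (i j : Fin n) :
    ∑ q : Fin n, lam i ^ ((n : ℤ) - 1 - (q : ℕ)) * ((-1) ^ (q : ℕ) * esym (univ.erase j) lam q)
      = if i = j then Delt lam j else 0 := by
  have hcard : #(univ.erase j) + 1 = n := by
    rw [card_erase_of_mem (mem_univ j), card_univ, Fintype.card_fin]; have := j.pos; omega
  have hpow : ∀ q : Fin n, lam i ^ ((n : ℤ) - 1 - (q : ℕ)) = lam i ^ (#(univ.erase j) - q) :=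
    fun q => by rw [← zpow_natCast]; congr 1; have := q.isLt; omega
  have vieta := prod_sub_eq_sum_esym (univ.erase j) lam (lam i)
  rw [hcard] at vieta
  simp_rw [hpow, mul_comm (lam i ^ _)]
  rw [Fin.sum_univ_eq_sum_range (fun q => (-1) ^ q * esym (univ.erase j) lam q
    * lam i ^ (#(univ.erase j) - q)), ← vieta]
  split_ifs with h
  · rw [h, Delt]
  · exact prod_eq_zero (mem_erase.2 ⟨h, mem_univ i⟩) (sub_self _)

lemma Delt_ne_zero {lam : Fin n → ℝ} (hinj : Injective lam) (i : Fin n) : Delt lam i ≠ 0 :=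
  prod_ne_zero_iff.2 fun _ hk => sub_ne_zero_of_ne (hinj.ne (mem_erase.1 hk).1.symm)

def revVandermonde (lam : Fin n → ℝ) : Matrix (Fin n) (Fin n) ℝ :=
  of fun i q => lam i ^ ((n : ℤ) - 1 - (q : ℕ))

def revVandermondeInv (lam : Fin n → ℝ) : Matrix (Fin n) (Fin n) ℝ :=
  of fun q i => (-1) ^ (q : ℕ) * esym (univ.erase i) lam q / Delt lam i

lemma revVandermonde_mul_inv {lam : Fin n → ℝ} (hinj : Injective lam) :
    revVandermonde lam * revVandermondeInv lam = 1 := by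
  ext i j
  simp only [mul_apply, revVandermonde, revVandermondeInv, of_apply, one_apply]
  simp_rw [mul_div_assoc']
  rw [← sum_div, sum_esym_erase_mul_zpow]
  split_ifs
  · exact div_self (Delt_ne_zero hinj j)
  · exact zero_div _

lemma revVandermondeInv_mul {lam : Fin n → ℝ} (hinj : Injective lam) :
    revVandermondeInv lam * revVandermonde lam = 1 :=
  mul_eq_one_comm.mp (revVandermonde_mul_inv hinj)

end Vandermonde

section Calculus

variable {ι : Type*} [DecidableEq ι] {lam : ι → ℝ}

lemma DifferentiableAt.comp_update [Fintype ι] {F : (ι → ℝ) → ℝ}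
    (hF : DifferentiableAt ℝ F lam) (p : ι) :
    DifferentiableAt ℝ (fun t => F (update lam p t)) (lam p) := by
  rw [← update_eq_self p lam] at hF
  exact hF.comp (lam p) (hasDerivAt_update lam p (lam p)).differentiableAt

lemma HasDerivAt.comp_update_apply {g : ℝ → ℝ} {g' : ℝ} {p i : ι}
    (hg : HasDerivAt g g' (lam i)) :
    HasDerivAt (fun t => g (update lam p t i)) (g' * Pi.single (M := fun _ => ℝ) p 1 i)
      (lam p) := by
  rw [← update_eq_self p lam] at hg
  exact hg.comp (lam p) (hasDerivAt_pi.1 (hasDerivAt_update lam p (lam p)) i)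

lemma eventually_update_mem_nhds {s : Set (ι → ℝ)} (hs : s ∈ 𝓝 lam) (p : ι) :
    ∀ᶠ t in 𝓝 (lam p), update lam p t ∈ s := by
  rw [← update_eq_self p lam] at hs
  exact (continuous_const.update p continuous_id).continuousAt.preimage_mem_nhds hs

lemma hasDerivAt_zpow_natCast_sub_one_sub (n q : ℕ) {x : ℝ} (hx : x ≠ 0) :
    HasDerivAt (fun x => x ^ ((n : ℤ) - 1 - q))
      (((n : ℝ) - (q + 1)) * x ^ ((n : ℤ) - q - 2)) x := by
  have h := hasDerivAt_zpow ((n : ℤ) - 1 - q) x (Or.inl hx)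
  rwa [show (n : ℤ) - 1 - q - 1 = n - q - 2 by ring,
    show (((n : ℤ) - 1 - q : ℤ) : ℝ) = n - (q + 1) by push_cast; ring] at h

lemma differentiableAt_leval (p : LaurentPolynomial ℝ) {x : ℝ} (hx : x ≠ 0) :
    DifferentiableAt ℝ (leval p) x :=
  DifferentiableAt.fun_sum fun _ _ => (differentiableAt_zpow.2 (Or.inl hx)).const_mul _

end Calculus

lemma isOpen_Omega (n : ℕ) : IsOpen (Omega n) := by
  have : Omega n = (⋂ i, {lam | lam i ≠ 0}) ∩ ⋂ i, ⋂ j, ⋂ (_ : i ≠ j), {lam | lam i ≠ lam j} := by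
    ext lam
    simp [Omega, injective_iff_pairwise_ne, Pairwise]
  rw [this]
  refine (isOpen_iInter_of_finite fun i => ?_).inter
    (isOpen_iInter_of_finite fun i => isOpen_iInter_of_finite fun j =>
      isOpen_iInter_of_finite fun _ => ?_)
  · exact isOpen_ne_fun (continuous_apply i) continuous_const
  · exact isOpen_ne_fun (continuous_apply i) (continuous_apply j)

section Separation

variable {n N : ℕ} {f σ : LaurentPolynomial ℝ}
  {H : (Fin n → ℝ) → (Fin n → ℝ) → (Fin N → ℝ) → Fin n → ℝ} {lam : Fin n → ℝ}

def sepRhs (n : ℕ) (f σ : LaurentPolynomial ℝ) (m : ℝ) (c : Fin N → ℝ) (x : ℝ) : ℝ :=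
  leval f x * m ^ 2 - leval σ x - ∑ k : Fin N, c k * x ^ ((n : ℤ) + (k : ℕ))

lemma hasDerivAt_sepRhs (m : ℝ) (c : Fin N → ℝ) {x : ℝ} (hx : x ≠ 0) :
    HasDerivAt (sepRhs n f σ m c) (deriv (leval f) x * m ^ 2 - deriv (leval σ) x
      - ∑ k : Fin N, ((n : ℝ) + (k : ℕ)) * c k * x ^ ((n : ℤ) + (k : ℕ) - 1)) x := by
  refine (((differentiableAt_leval f hx).hasDerivAt.mul_const _).sub
    (differentiableAt_leval σ hx).hasDerivAt).sub ?_
  convert HasDerivAt.fun_sum fun (k : Fin N) _ =>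
    (hasDerivAt_zpow ((n : ℤ) + (k : ℕ)) x (Or.inl hx)).const_mul (c k) using 1
  refine sum_congr rfl fun k _ => ?_
  push_cast; ring

lemma SepSol.revVandermonde_mulVec (hH : SepSol n N f σ 0 H) (hlam : lam ∈ Omega n)
    (mu : Fin n → ℝ) (c : Fin N → ℝ) :
    revVandermonde lam *ᵥ H lam mu c = fun i => sepRhs n f σ (mu i) c (lam i) := by
  funext i
  have h := hH lam hlam mu c i
  simp only [Nat.cast_zero, neg_zero, zpow_zero, mul_one, Nat.zero_le, if_true, sub_zero] at h
  simp only [mulVec, dotProduct, revVandermonde, of_apply, sepRhs]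
  simp only [mul_comm (lam i ^ (_ : ℤ)) (H lam mu c _)]
  linarith

lemma SepSol.eq_revVandermondeInv_mulVec (hH : SepSol n N f σ 0 H) (hlam : lam ∈ Omega n)
    (mu : Fin n → ℝ) (c : Fin N → ℝ) :
    H lam mu c = revVandermondeInv lam *ᵥ fun i => sepRhs n f σ (mu i) c (lam i) := by
  rw [← hH.revVandermonde_mulVec hlam, mulVec_mulVec, revVandermondeInv_mul hlam.2, one_mulVec]

lemma differentiableAt_revVandermondeInv_apply (hinj : Injective lam) (q i : Fin n) :
    DifferentiableAt ℝ (fun lam => revVandermondeInv lam q i) lam := by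
  have hΔ := Delt_ne_zero hinj i
  simp only [revVandermondeInv, of_apply, esym, Delt] at hΔ ⊢
  fun_prop (disch := exact hΔ)

lemma SepSol.differentiableAt (hH : SepSol n N f σ 0 H) (hlam : lam ∈ Omega n)
    (mu : Fin n → ℝ) (c : Fin N → ℝ) (q : Fin n) :
    DifferentiableAt ℝ (fun lam => H lam mu c q) lam := by
  have hH' : (fun lam => H lam mu c q) =ᶠ[𝓝 lam]
      fun lam => ∑ i, revVandermondeInv lam q i * sepRhs n f σ (mu i) c (lam i) :=
    Filter.eventually_of_mem ((isOpen_Omega n).mem_nhds hlam) fun _ h =>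
      congrFun (hH.eq_revVandermondeInv_mulVec h mu c) q
  refine DifferentiableAt.congr_of_eventuallyEq ?_ hH'
  refine DifferentiableAt.fun_sum fun i _ =>
    (differentiableAt_revVandermondeInv_apply hlam.2 q i).mul ?_
  have hi : DifferentiableAt ℝ (fun lam : Fin n → ℝ => lam i) lam := differentiableAt_apply i lam
  exact (hasDerivAt_sepRhs (mu i) c (hlam.1 i)).differentiableAt.comp lam hi

lemma SepSol.revVandermonde_mulVec_pLam (hH : SepSol n N f σ 0 H) (hlam : lam ∈ Omega n)
    (mu : Fin n → ℝ) (c : Fin N → ℝ) (p : Fin n) :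
    revVandermonde lam *ᵥ (fun q => pLam H lam mu c q p) = Pi.single p
      (deriv (sepRhs n f σ (mu p) c) (lam p)
        - ∑ q : Fin n, ((n : ℝ) - ((q : ℕ) + 1)) * H lam mu c q *
            lam p ^ ((n : ℤ) - (q : ℕ) - 2)) := by
  funext i
  have hrel : (fun t => sepRhs n f σ (mu i) c (update lam p t i)) =ᶠ[𝓝 (lam p)]
      fun t => ∑ q : Fin n,
        update lam p t i ^ ((n : ℤ) - 1 - (q : ℕ)) * H (update lam p t) mu c q := by
    filter_upwards [eventually_update_mem_nhds ((isOpen_Omega n).mem_nhds hlam) p] with t ht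
    rw [← congrFun (hH.revVandermonde_mulVec ht mu c) i]
    simp only [mulVec, dotProduct, revVandermonde, of_apply]
  have hlhs := HasDerivAt.fun_sum (u := univ) fun (q : Fin n) _ =>
    (hasDerivAt_zpow_natCast_sub_one_sub n q (hlam.1 i)).comp_update_apply (p := p) |>.fun_mul
      ((hH.differentiableAt hlam mu c q).comp_update p).hasDerivAt
  have hrhs := (hasDerivAt_sepRhs (n := n) (f := f) (σ := σ) (mu i) c (hlam.1 i)
    ).differentiableAt.hasDerivAt.comp_update_apply (p := p)
  have hderiv := (hlhs.congr_of_eventuallyEq hrel).unique hrhs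
  simp only [update_eq_self] at hderiv
  simp only [mulVec, dotProduct, revVandermonde, of_apply, pLam]
  rcases eq_or_ne i p with rfl | hip
  · simp only [Pi.single_eq_same, mul_one, sum_add_distrib] at hderiv ⊢
    simp only [mul_right_comm _ (lam _ ^ (_ : ℤ)) (H lam mu c _)] at hderiv
    linarith
  · simpa [hip] using hderiv

end Separation

theorem dh_dlam_formula_general
    (n N : ℕ)
    (f σ : LaurentPolynomial ℝ)
    (H : (Fin n → ℝ) → (Fin n → ℝ) → (Fin N → ℝ) → Fin n → ℝ)
    (hH : SepSol n N f σ 0 H)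
    (lam : Fin n → ℝ) (hlam : lam ∈ Omega n) (mu : Fin n → ℝ) (c : Fin N → ℝ)
    (r p : Fin n) :
    pLam H lam mu c r p
      = (-1 : ℝ) ^ (r : ℕ) * esym (Finset.univ.erase p) lam (r : ℕ) * (1 / Delt lam p) *
          (deriv (leval f) (lam p) * mu p ^ 2 - deriv (leval σ) (lam p)
            - (∑ k : Fin N, ((n : ℝ) + (k : ℕ)) * c k * lam p ^ ((n : ℤ) + (k : ℕ) - 1))
            - ∑ k : Fin n, ((n : ℝ) - ((k : ℕ) + 1)) * H lam mu c k *
                lam p ^ ((n : ℤ) - (k : ℕ) - 2)) := by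
  have hsys := congrArg (revVandermondeInv lam *ᵥ ·) (hH.revVandermonde_mulVec_pLam hlam mu c p)
  simp only [mulVec_mulVec, revVandermondeInv_mul hlam.2, one_mulVec] at hsys
  rw [congrFun hsys r, (hasDerivAt_sepRhs (mu p) c (hlam.1 p)).deriv]
  simp only [mulVec, dotProduct_single, revVandermondeInv, of_apply]
  ring

/-- `(∂h_r/∂λ_p)(λ, μ, c) = (-1)^{r+1} e_{r-1}(λ̂_p) (1/Δ_p)
( f′(λ_p) μ_p² - σ′(λ_p) - Σ_{k=1}^{N} (n+k-1) c_k λ_p^{n+k-2}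
  - Σ_{k=1}^{n} (n-k) h_k λ_p^{n-k-1} )` for the curve-0 Hamiltonians
(1-based `r, k`; 0-based below). -/
theorem dh_dlam_formula
    (n N : ℕ) (hn : 1 ≤ n) (hN1 : 1 ≤ N) (hNn : N ≤ n)
    (f σ : LaurentPolynomial ℝ)
    (H : (Fin n → ℝ) → (Fin n → ℝ) → (Fin N → ℝ) → Fin n → ℝ)
    (hH : SepSol n N f σ 0 H)
    (lam : Fin n → ℝ) (hlam : lam ∈ Omega n) (mu : Fin n → ℝ) (c : Fin N → ℝ)
    (r p : Fin n) :
    pLam H lam mu c r p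
      = (-1 : ℝ) ^ (r : ℕ) * esym (Finset.univ.erase p) lam (r : ℕ) * (1 / Delt lam p) *
          (deriv (leval f) (lam p) * mu p ^ 2 - deriv (leval σ) (lam p)
            - (∑ k : Fin N, ((n : ℝ) + (k : ℕ)) * c k * lam p ^ ((n : ℤ) + (k : ℕ) - 1))
            - ∑ k : Fin n, ((n : ℝ) - ((k : ℕ) + 1)) * H lam mu c k *
                lam p ^ ((n : ℤ) - (k : ℕ) - 2)) :=
  dh_dlam_formula_general n N f σ H hH lam hlam mu c r p
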